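/- Let G be a finite simple graph on n vertices, and suppose G contains a matching M (a set of pairwise vertex-disjoint edges) such that each edge uv ∈ M is a pair of adjacent twins, i.e., N[u] = N[v]. Then r₂(G) = 2|M| + r₂(G - V(M)), where G - V(M) is the induced subgraph of G on the vertices not covered by M. -/

import Mathlib

open scoped Classical

/-- A list of bicliques `B 0, …, B (k-1)` (each given by a pair of disjoint
vertex subsets) is an *odd cover* of `G` if two distinct vertices are adjacent
in `G` exactly when they lie in opposite parts of an odd number of the bicliques. -/
def IsOddCover {V : Type*} [Fintype V] (G : SimpleGraph V) {k : ℕ}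
    (B : Fin k → Finset V × Finset V) : Prop :=
  (∀ i, Disjoint (B i).1 (B i).2) ∧
  ∀ u v : V, u ≠ v →
    (G.Adj u v ↔ Odd (Finset.univ.filter (fun i : Fin k =>
      (u ∈ (B i).1 ∧ v ∈ (B i).2) ∨ (u ∈ (B i).2 ∧ v ∈ (B i).1))).card)

/-- `b2 G` is the minimum cardinality of an odd cover of `G`. -/
noncomputable def b2 {V : Type*} [Fintype V] (G : SimpleGraph V) : ℕ :=
  sInf {k : ℕ | ∃ B : Fin k → Finset V × Finset V, IsOddCover G B}

/-- `r2 G` is the rank of the adjacency matrix of `G` over `𝔽₂`. -/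
noncomputable def r2 {V : Type*} [Fintype V] (G : SimpleGraph V) : ℕ :=
  (Matrix.of fun u v : V => if G.Adj u v then (1 : ZMod 2) else 0).rank

/-! Let `σ` swap the two ends of every edge of `M` and fix all other vertices. Over `𝔽₂`, the
twin condition `N[u] = N[w]` says that rows `u` and `w` of `A + 1` agree, `A` being the adjacency
matrix. Hence every `x ∈ ker A`, being equal to `(A + 1) x`, is `σ`-invariant; since `A + 1` is
symmetric its columns are `σ`-invariant as well, so in characteristic `2` it kills every
`σ`-invariant vector supported on `V(M)`. It follows that `x ∈ ker A` exactly when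
`x = (A + 1) x'`, where `x'` is `x` with its entries on `V(M)` set to zero. So restriction to
`V ∖ V(M)` is an isomorphism from `ker A` onto the kernel of the adjacency matrix of `G - V(M)`,
with inverse `y ↦ (A + 1) y` (`y` extended by zero), and rank–nullity gives the formula. -/

open Function

lemma CharTwo.pi_add_eq_zero {ι R : Type*} [Ring R] [CharP R 2] {a b : ι → R} :
    a + b = 0 ↔ a = b := by
  simp only [funext_iff, Pi.add_apply, Pi.zero_apply, CharTwo.add_eq_zero]

namespace Matrix

variable {K V : Type*} [Field K] [Fintype V] {A : Matrix V V K} {σ : V → V} {T : Set V}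

lemma mulVec_apply_eq_of_row_eq (hrow : ∀ v, A (σ v) = A v) (x : V → K) (v : V) :
    (A *ᵥ x) (σ v) = (A *ᵥ x) v := by
  simp only [mulVec, hrow]

lemma IsSymm.mulVec_eq_zero_of_row_eq [CharP K 2] (hA : A.IsSymm) (hσ : Involutive σ)
    (hrow : ∀ v, A (σ v) = A v) {y : V → K} (hy : ∀ v, y (σ v) = y v)
    (hfix : ∀ v, σ v = v → y v = 0) : A *ᵥ y = 0 := by
  ext w
  refine Finset.sum_involution (fun v _ => σ v) (fun v _ => ?_) (fun v _ hv hσv => hv ?_)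
    (fun v _ => Finset.mem_univ _) (fun v _ => hσ v)
  · dsimp only
    rw [← hA.apply w (σ v), hrow, hA.apply w v, hy, CharTwo.add_self_eq_zero]
  · rw [hfix v hσv, mul_zero]

lemma submatrix_mulVec_comp_val (A : Matrix V V K) (T : Set V) [Fintype T] (x : V → K) :
    (A.submatrix (↑) (↑) : Matrix T T K) *ᵥ (x ∘ (↑)) = (A *ᵥ T.indicator x) ∘ (↑) := by
  ext t
  simp only [mulVec, dotProduct, submatrix_apply, Function.comp_apply, Set.indicator_apply,
    mul_ite, mul_zero, ← Finset.sum_filter, Set.filter_mem_univ_eq_toFinset]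
  exact Finset.sum_set_coe (f := fun v => A t v * x v) T

lemma rank_add_finrank_ker {m : Type*} (A : Matrix m V K) :
    A.rank + Module.finrank K (LinearMap.ker A.mulVecLin) = Fintype.card V := by
  rw [rank, LinearMap.finrank_range_add_finrank_ker, Module.finrank_fintype_fun_eq_card]

variable [DecidableEq V]

lemma apply_eq_of_mulVec_eq_zero (hrow : ∀ v, (A + 1) (σ v) = (A + 1) v) {x : V → K}
    (hx : A *ᵥ x = 0) (v : V) : x (σ v) = x v := by
  have h : (A + 1) *ᵥ x = x := by rw [add_mulVec, hx, one_mulVec, zero_add]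
  rw [← h, mulVec_apply_eq_of_row_eq hrow]

variable [CharP K 2]

lemma IsSymm.mulVec_indicator_compl (hA : A.IsSymm) (hσ : Involutive σ)
    (hT : ∀ v, σ v = v ↔ v ∈ T) (hrow : ∀ v, (A + 1) (σ v) = (A + 1) v) {x : V → K}
    (hx : ∀ v, x (σ v) = x v) : A *ᵥ Tᶜ.indicator x = Tᶜ.indicator x := by
  have hσT (v : V) : σ v ∈ T ↔ v ∈ T := by rw [← hT, ← hT, hσ v, eq_comm]
  have hy (v : V) : Tᶜ.indicator x (σ v) = Tᶜ.indicator x v := by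
    simp only [Set.indicator_apply, Set.mem_compl_iff, hσT, hx]
  have h := (hA.add isSymm_one).mulVec_eq_zero_of_row_eq hσ hrow hy
    (fun v hv => Set.indicator_of_notMem (not_not.mpr ((hT v).1 hv)) x)
  rwa [add_mulVec, one_mulVec, CharTwo.pi_add_eq_zero] at h

lemma IsSymm.mulVec_eq_zero_iff (hA : A.IsSymm) (hσ : Involutive σ)
    (hT : ∀ v, σ v = v ↔ v ∈ T) (hrow : ∀ v, (A + 1) (σ v) = (A + 1) v) {x : V → K} :
    A *ᵥ x = 0 ↔ (A + 1) *ᵥ T.indicator x = x := by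
  have hsplit := Set.indicator_self_add_compl T x
  have hS (hx : ∀ v, x (σ v) = x v) : A *ᵥ Tᶜ.indicator x = Tᶜ.indicator x :=
    hA.mulVec_indicator_compl hσ hT hrow hx
  constructor
  · intro hx
    have hxS := hS (apply_eq_of_mulVec_eq_zero hrow hx)
    rw [← hsplit, mulVec_add, hxS, CharTwo.pi_add_eq_zero] at hx
    rw [add_mulVec, one_mulVec, hx, add_comm, hsplit]
  · intro hx
    have hxS := hS fun v => by rw [← hx, mulVec_apply_eq_of_row_eq hrow]
    rw [add_mulVec, one_mulVec] at hx
    rw [← hsplit, mulVec_add, hxS, CharTwo.pi_add_eq_zero, Set.indicator_compl]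
    exact eq_sub_of_add_eq hx

lemma IsSymm.eq_zero_of_mulVec_eq_zero_of_comp_val_eq_zero (hA : A.IsSymm) (hσ : Involutive σ)
    (hT : ∀ v, σ v = v ↔ v ∈ T) (hrow : ∀ v, (A + 1) (σ v) = (A + 1) v) {x : V → K}
    (hx : A *ᵥ x = 0) (hxT : x ∘ ((↑) : T → V) = 0) : x = 0 := by
  have hxT' : T.indicator x = 0 :=
    funext fun v => Set.indicator_apply_eq_zero.2 fun hv => congrFun hxT ⟨v, hv⟩
  rw [hA.mulVec_eq_zero_iff hσ hT hrow, hxT', mulVec_zero] at hx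
  exact hx.symm

variable [Fintype T]

lemma IsSymm.submatrix_mulVec_comp_val_eq_zero (hA : A.IsSymm) (hσ : Involutive σ)
    (hT : ∀ v, σ v = v ↔ v ∈ T) (hrow : ∀ v, (A + 1) (σ v) = (A + 1) v) {x : V → K}
    (hx : A *ᵥ x = 0) : (A.submatrix (↑) (↑) : Matrix T T K) *ᵥ (x ∘ (↑)) = 0 := by
  rw [hA.mulVec_eq_zero_iff hσ hT hrow] at hx
  ext t
  have ht := congrFun hx t
  rw [add_mulVec, one_mulVec, Pi.add_apply, Set.indicator_of_mem t.2, add_eq_right] at ht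
  rw [submatrix_mulVec_comp_val, Function.comp_apply, ht, Pi.zero_apply]

lemma IsSymm.exists_mulVec_eq_zero_comp_val_eq (hA : A.IsSymm) (hσ : Involutive σ)
    (hT : ∀ v, σ v = v ↔ v ∈ T) (hrow : ∀ v, (A + 1) (σ v) = (A + 1) v) {y : T → K}
    (hy : (A.submatrix (↑) (↑) : Matrix T T K) *ᵥ y = 0) :
    ∃ x, A *ᵥ x = 0 ∧ x ∘ (↑) = y := by
  let z := extend ((↑) : T → V) y 0
  have hz_val : z ∘ (↑) = y := funext (Subtype.val_injective.extend_apply y 0)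
  have hz_out (v : V) (hv : v ∉ T) : z v = 0 :=
    extend_apply' _ _ _ (by rintro ⟨t, rfl⟩; exact hv t.2)
  have hzT : T.indicator z = z := Set.indicator_eq_self.2 fun v hv => by_contra (hv <| hz_out v ·)
  have hAz (t : T) : (A *ᵥ z) t = 0 := by
    have h := congrFun (submatrix_mulVec_comp_val A T z) t
    rw [hzT, hz_val, hy] at h
    exact h.symm
  have hz : T.indicator ((A + 1) *ᵥ z) = z := by
    ext v
    by_cases hv : v ∈ T
    · rw [Set.indicator_of_mem hv, add_mulVec, one_mulVec, Pi.add_apply, hAz ⟨v, hv⟩, zero_add]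
    · rw [Set.indicator_of_notMem hv, hz_out v hv]
  refine ⟨(A + 1) *ᵥ z, (hA.mulVec_eq_zero_iff hσ hT hrow).2 (by rw [hz]), ?_⟩
  ext t
  rw [← hz_val, Function.comp_apply, Function.comp_apply,
    ← Set.indicator_of_mem t.2 ((A + 1) *ᵥ z), hz]

lemma IsSymm.finrank_ker_eq_finrank_ker_submatrix (hA : A.IsSymm) (hσ : Involutive σ)
    (hT : ∀ v, σ v = v ↔ v ∈ T) (hrow : ∀ v, (A + 1) (σ v) = (A + 1) v) :
    Module.finrank K (LinearMap.ker A.mulVecLin) =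
      Module.finrank K (LinearMap.ker (A.submatrix (↑) (↑) : Matrix T T K).mulVecLin) := by
  let restrict : LinearMap.ker A.mulVecLin →ₗ[K]
      LinearMap.ker (A.submatrix (↑) (↑) : Matrix T T K).mulVecLin :=
    (LinearMap.funLeft K K Subtype.val).restrict fun _ hx =>
      hA.submatrix_mulVec_comp_val_eq_zero hσ hT hrow hx
  refine LinearEquiv.finrank_eq (LinearEquiv.ofBijective restrict ⟨?_, ?_⟩)
  · rw [← LinearMap.ker_eq_bot, LinearMap.ker_eq_bot']
    rintro ⟨x, hx⟩ hx₀
    exact Subtype.ext (hA.eq_zero_of_mulVec_eq_zero_of_comp_val_eq_zero hσ hT hrow hx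
      (congrArg Subtype.val hx₀))
  · rintro ⟨y, hy⟩
    obtain ⟨x, hx, rfl⟩ := hA.exists_mulVec_eq_zero_comp_val_eq hσ hT hrow hy
    exact ⟨⟨x, hx⟩, rfl⟩

lemma IsSymm.rank_eq_ncard_compl_add_rank_submatrix (hA : A.IsSymm) (hσ : Involutive σ)
    (hT : ∀ v, σ v = v ↔ v ∈ T) (hrow : ∀ v, (A + 1) (σ v) = (A + 1) v) :
    A.rank = Tᶜ.ncard + (A.submatrix (↑) (↑) : Matrix T T K).rank := by
  have hcard : Tᶜ.ncard + Fintype.card T = Fintype.card V := by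
    rw [← Nat.card_eq_fintype_card, ← Nat.card_eq_fintype_card, Nat.card_coe_set_eq, add_comm,
      Set.ncard_add_ncard_compl]
  have hker := hA.finrank_ker_eq_finrank_ker_submatrix hσ hT hrow
  have hrankA := rank_add_finrank_ker A
  have hrankB := rank_add_finrank_ker (A.submatrix (↑) (↑) : Matrix T T K)
  omega

end Matrix

namespace SimpleGraph

namespace Subgraph.IsMatching

variable {V : Type*} {G : SimpleGraph V} {M : G.Subgraph} {v w : V}

noncomputable def partner (h : M.IsMatching) (v : V) : V :=
  if hv : v ∈ M.verts then (h hv).choose else v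

lemma adj_partner (h : M.IsMatching) (hv : v ∈ M.verts) : M.Adj v (h.partner v) := by
  rw [partner, dif_pos hv]
  exact (h hv).choose_spec.1

lemma partner_eq_of_adj (h : M.IsMatching) (hvw : M.Adj v w) : h.partner v = w :=
  h.eq_of_adj_left (h.adj_partner hvw.fst_mem) hvw

lemma partner_eq_self_of_notMem (h : M.IsMatching) (hv : v ∉ M.verts) : h.partner v = v := by
  rw [partner, dif_neg hv]

lemma involutive_partner (h : M.IsMatching) : Involutive h.partner := fun v => by
  by_cases hv : v ∈ M.verts
  · exact h.partner_eq_of_adj (h.adj_partner hv).symm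
  · rw [h.partner_eq_self_of_notMem hv, h.partner_eq_self_of_notMem hv]

lemma partner_eq_self_iff (h : M.IsMatching) : h.partner v = v ↔ v ∉ M.verts :=
  ⟨fun hσ hv => (h.adj_partner hv).ne hσ.symm, h.partner_eq_self_of_notMem⟩

lemma ncard_verts (h : M.IsMatching) [Fintype V] : M.verts.ncard = 2 * M.edgeSet.ncard := by
  have hfiber (e : M.edgeSet) : Nat.card {v // h.toEdge v = e} = 2 := by
    obtain ⟨e, he⟩ := e
    induction e using Sym2.ind with | h u w => ?_
    change Nat.card (h.toEdge ⁻¹' {⟨s(u, w), he⟩}) = 2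
    rw [h.toEdge_preimage_singleton he, Nat.card_coe_set_eq, Set.ncard_pair]
    simpa using (M.adj_sub he).ne
  rw [← Nat.card_coe_set_eq, ← Nat.card_congr (Equiv.sigmaFiberEquiv h.toEdge), Nat.card_sigma,
    Finset.sum_const_nat fun e _ => hfiber e, Finset.card_univ, ← Nat.card_eq_fintype_card,
    Nat.card_coe_set_eq, mul_comm]

end Subgraph.IsMatching

lemma adjMatrix_add_one_eq_indicator {V : Type*} (G : SimpleGraph V) [DecidableRel G.Adj]
    [DecidableEq V] (R : Type*) [NonAssocSemiring R] (u : V) :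
    (G.adjMatrix R + 1) u = (G.neighborSet u ∪ {u}).indicator 1 := by
  ext y
  by_cases hyu : y = u
  · simp [hyu]
  · simp [Set.indicator_apply, adjMatrix_apply, hyu, Ne.symm hyu]

end SimpleGraph

lemma r2_eq_rank_adjMatrix {V : Type*} [Fintype V] (G : SimpleGraph V) :
    r2 G = (G.adjMatrix (ZMod 2)).rank := rfl

lemma r2_induce {V : Type*} [Fintype V] (G : SimpleGraph V) (s : Set V) [Fintype s] :
    r2 (G.induce s) = ((G.adjMatrix (ZMod 2)).submatrix (↑) (↑) : Matrix s s (ZMod 2)).rank := by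
  rw [r2_eq_rank_adjMatrix]
  congr 1

theorem stmt14 {V : Type*} [Fintype V] (G : SimpleGraph V) (M : G.Subgraph)
    (hM : M.IsMatching)
    (htwin : ∀ u w : V, M.Adj u w →
      G.neighborSet u ∪ {u} = G.neighborSet w ∪ {w}) :
    r2 G = 2 * M.edgeSet.ncard + r2 (G.induce M.vertsᶜ) := by
  have hrow (v : V) :
      (G.adjMatrix (ZMod 2) + 1) (hM.partner v) = (G.adjMatrix (ZMod 2) + 1) v := by
    by_cases hv : v ∈ M.verts
    · simp only [SimpleGraph.adjMatrix_add_one_eq_indicator, htwin v _ (hM.adj_partner hv)]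
    · rw [hM.partner_eq_self_of_notMem hv]
  have h := G.isSymm_adjMatrix.rank_eq_ncard_compl_add_rank_submatrix hM.involutive_partner
    (T := M.vertsᶜ) (fun _ => hM.partner_eq_self_iff) hrow
  rw [compl_compl, hM.ncard_verts] at h
  rw [r2_eq_rank_adjMatrix, r2_induce, h]
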